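/- arXiv:1909.07693 — 6 statements merged into one kernel-verified Lean document; each statement's English description precedes it below -/
import Mathlib

section
/- Chittenden's metrization criterion: Let X be a nonempty set with a symmetric distance function F : X × X → [0,∞) such that F(x,y) = 0 iff x = y, and suppose F is uniformly regular, i.e., for every ε > 0 there exists δ > 0 such that F(x,y) < δ and F(y,z) < δ imply F(x,z) < ε. Then there exists a genuine metric ρ on X that is uniformly equivalent to F (in particular the topology generated by F-balls is metrizable). -/
/-- Chittenden's metrization criterion: a symmetric, uniformly regular distance
function is uniformly equivalent to a genuine metric. -/
theorem chittenden_metrization {X : Type*} [Nonempty X] (F : X → X → ℝ)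
    (hnn : ∀ x y, 0 ≤ F x y)
    (h0 : ∀ x y, F x y = 0 ↔ x = y)
    (hsymm : ∀ x y, F x y = F y x)
    (hreg : ∀ ε > 0, ∃ δ > 0, ∀ x y z : X, F x y < δ → F y z < δ → F x z < ε) :
    ∃ ρ : X → X → ℝ,
      (∀ x y, 0 ≤ ρ x y) ∧
      (∀ x y, ρ x y = 0 ↔ x = y) ∧
      (∀ x y, ρ x y = ρ y x) ∧
      (∀ x y z, ρ x z ≤ ρ x y + ρ y z) ∧
      (∀ ε > 0, ∃ δ > 0, ∀ x y : X, F x y < δ → ρ x y < ε) ∧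
      (∀ ε > 0, ∃ δ > 0, ∀ x y : X, ρ x y < δ → F x y < ε) := by
  classical
  -- three-step refinement lemma
  have key : ∀ η : ℝ, ∃ δ' : ℝ, 0 < η → (0 < δ' ∧ δ' ≤ η ∧
      ∀ a b c e : X, F a b < δ' → F b c < δ' → F c e < δ' → F a e < η) := by
    intro η
    by_cases hη : 0 < η
    · obtain ⟨η1, hη1, H1⟩ := hreg η hη
      obtain ⟨η2, hη2, H2⟩ := hreg η1 hη1
      refine ⟨min η2 (min η1 η), fun _ => ⟨?_, ?_, ?_⟩⟩
      · positivity
      · exact (min_le_right _ _).trans (min_le_right _ _)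
      · intro a b c e hab hbc hce
        have hac : F a c < η1 :=
          H2 a b c (hab.trans_le (min_le_left _ _)) (hbc.trans_le (min_le_left _ _))
        exact H1 a c e hac
          (hce.trans_le ((min_le_right _ _).trans (min_le_left _ _)))
    · exact ⟨1, fun h => absurd h hη⟩
  choose f hf using key
  -- the sequence δ n
  set D : ℕ → ℝ := fun n => Nat.rec 1 (fun n dn => f (min dn ((2⁻¹ : ℝ) ^ (n + 1)))) n with hDdef
  have D0 : D 0 = 1 := rfl
  have Dsucc : ∀ n, D (n + 1) = f (min (D n) ((2⁻¹ : ℝ) ^ (n + 1))) := fun n => rfl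
  have Dpos : ∀ n, 0 < D n := by
    intro n
    induction n with
    | zero => norm_num [D0]
    | succ n ih =>
      rw [Dsucc]
      have hmin : 0 < min (D n) ((2⁻¹ : ℝ) ^ (n + 1)) := lt_min ih (by positivity)
      exact (hf _ hmin).1
  have Dle : ∀ n, D (n + 1) ≤ min (D n) ((2⁻¹ : ℝ) ^ (n + 1)) := by
    intro n
    have hmin : 0 < min (D n) ((2⁻¹ : ℝ) ^ (n + 1)) := lt_min (Dpos n) (by positivity)
    rw [Dsucc]; exact (hf _ hmin).2.1
  have Dstep : ∀ n, ∀ a b c e : X,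
      F a b < D (n + 1) → F b c < D (n + 1) → F c e < D (n + 1) → F a e < D n := by
    intro n a b c e hab hbc hce
    have hmin : 0 < min (D n) ((2⁻¹ : ℝ) ^ (n + 1)) := lt_min (Dpos n) (by positivity)
    rw [Dsucc] at hab hbc hce
    exact ((hf _ hmin).2.2 a b c e hab hbc hce).trans_le (min_le_left _ _)
  have Danti : Antitone D :=
    antitone_nat_of_succ_le fun n => (Dle n).trans (min_le_left _ _)
  have Dsmall : ∀ n, D (n + 1) ≤ (2⁻¹ : ℝ) ^ (n + 1) := fun n =>
    (Dle n).trans (min_le_right _ _)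
  -- the index function
  have exN : ∀ r : ℝ, ∃ n, 0 < r → D n ≤ r := by
    intro r
    by_cases hr : 0 < r
    · obtain ⟨n, hn⟩ := exists_pow_lt_of_lt_one hr (by norm_num : (2⁻¹ : ℝ) < 1)
      refine ⟨n + 1, fun _ => (Dsmall n).trans (le_trans ?_ hn.le)⟩
      exact pow_le_pow_of_le_one (by norm_num) (by norm_num) (Nat.le_succ n)
    · exact ⟨0, fun h => absurd h hr⟩
  set N : ℝ → ℕ := fun r => Nat.find (exN r) with hNdef
  have Nspec : ∀ r : ℝ, 0 < r → D (N r) ≤ r := fun r hr => Nat.find_spec (exN r) hr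
  have Nmin : ∀ r : ℝ, ∀ k, k < N r → r < D k := by
    intro r k hk
    have h := Nat.find_min (exN r) hk
    push_neg at h
    exact h.2
  -- the pre-distance
  set d : X → X → NNReal := fun x y => if x = y then 0 else (2⁻¹ : NNReal) ^ (N (F x y)) with hddef
  have half_pos : (0 : NNReal) < 2⁻¹ := by norm_num
  have half_lt_one : (2⁻¹ : NNReal) < 1 := by
    rw [← NNReal.coe_lt_coe]; norm_num
  have dself : ∀ x, d x x = 0 := fun x => by simp [hddef]
  have dcomm : ∀ x y, d x y = d y x := by
    intro x y
    rcases eq_or_ne x y with h | h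
    · simp [h]
    · simp only [hddef, if_neg h, if_neg h.symm, hsymm x y]
  have dle_one : ∀ x y, d x y ≤ 1 := by
    intro x y
    rcases eq_or_ne x y with h | h
    · simp [hddef, h]
    · simp only [hddef, if_neg h]
      exact pow_le_one₀ zero_le half_lt_one.le
  have Fpos : ∀ {x y : X}, x ≠ y → 0 < F x y := by
    intro x y h
    rcases lt_or_eq_of_le (hnn x y) with h' | h'
    · exact h'
    · exact absurd ((h0 x y).1 h'.symm) h
  have dle_iff : ∀ (n : ℕ) (x y : X), d x y ≤ (2⁻¹ : NNReal) ^ (n + 1) ↔ F x y < D n := by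
    intro n x y
    rcases eq_or_ne x y with h | h
    · subst h
      simp only [dself, zero_le, true_iff]
      rw [(h0 x x).2 rfl]
      exact Dpos n
    · simp only [hddef, if_neg h]
      constructor
      · intro hle
        have hm : n + 1 ≤ N (F x y) := by
          by_contra hlt
          push_neg at hlt
          have := pow_lt_pow_right_of_lt_one₀ half_pos half_lt_one hlt
          exact absurd hle (not_le.2 this)
        exact Nmin _ n hm
      · intro hF
        have hm : n + 1 ≤ N (F x y) := by
          by_contra hlt
          push_neg at hlt
          have h1 : D (N (F x y)) ≤ F x y := Nspec _ (Fpos h)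
          have h2 : D n ≤ D (N (F x y)) := Danti (Nat.lt_succ_iff.1 hlt)
          exact absurd hF (not_lt.2 (h2.trans h1))
        exact pow_le_pow_of_le_one zero_le half_lt_one.le hm
  have ddisc : ∀ (n : ℕ) (x y : X), d x y < (2⁻¹ : NNReal) ^ (n + 1) →
      d x y ≤ (2⁻¹ : NNReal) ^ (n + 2) := by
    intro n x y hlt
    rcases eq_or_ne x y with h | h
    · simp [hddef, h]
    · simp only [hddef, if_neg h] at hlt ⊢
      have : n + 1 < N (F x y) := (pow_lt_pow_iff_right_of_lt_one₀ half_pos half_lt_one).1 hlt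
      exact pow_le_pow_of_le_one zero_le half_lt_one.le this
  -- the 2 * max inequality
  have hd2 : ∀ x₁ x₂ x₃ x₄ : X,
      d x₁ x₄ ≤ 2 * max (d x₁ x₂) (max (d x₂ x₃) (d x₃ x₄)) := by
    intro x₁ x₂ x₃ x₄
    rcases eq_or_ne x₁ x₄ with h14 | h14
    · simp [dself, h14]
    · by_contra hcon
      push_neg at hcon
      set M := max (d x₁ x₂) (max (d x₂ x₃) (d x₃ x₄)) with hM
      set m := N (F x₁ x₄) with hm
      have hd14 : d x₁ x₄ = (2⁻¹ : NNReal) ^ m := by simp [hddef, if_neg h14, hm]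
      have hM' : M < (2⁻¹ : NNReal) ^ (m + 1) := by
        rw [hd14] at hcon
        have h2 : (2⁻¹ : NNReal) * (2 * M) < 2⁻¹ * 2⁻¹ ^ m :=
          mul_lt_mul_of_pos_left hcon half_pos
        have h3 : (2⁻¹ : NNReal) * (2 * M) = M := by
          rw [← mul_assoc, inv_mul_cancel₀ (two_ne_zero), one_mul]
        rw [h3] at h2
        rw [pow_succ, mul_comm ((2⁻¹ : NNReal) ^ m) 2⁻¹]
        exact h2
      have key3 : ∀ a b : X, d a b ≤ M → F a b < D (m + 1) := by
        intro a b hab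
        have h1 : d a b < (2⁻¹ : NNReal) ^ (m + 1) := lt_of_le_of_lt hab hM'
        have h2 : d a b ≤ (2⁻¹ : NNReal) ^ (m + 1 + 1) := ddisc m a b h1
        exact (dle_iff (m + 1) a b).1 h2
      have f12 := key3 x₁ x₂ (le_max_left _ _)
      have f23 := key3 x₂ x₃ ((le_max_left _ _).trans (le_max_right _ _))
      have f34 := key3 x₃ x₄ ((le_max_right _ _).trans (le_max_right _ _))
      have hF14 : F x₁ x₄ < D m := Dstep m _ _ _ _ f12 f23 f34
      have hle : d x₁ x₄ ≤ (2⁻¹ : NNReal) ^ (m + 1) := (dle_iff m _ _).2 hF14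
      rw [hd14] at hle
      exact absurd hle (not_le.2
        (pow_lt_pow_right_of_lt_one₀ half_pos half_lt_one (Nat.lt_succ_self m)))
  letI instM : PseudoMetricSpace X := PseudoMetricSpace.ofPreNNDist d dself dcomm
  have hle : ∀ x y : X, dist x y ≤ d x y :=
    PseudoMetricSpace.dist_ofPreNNDist_le d dself dcomm
  have htwo : ∀ x y : X, (d x y : ℝ) ≤ 2 * dist x y :=
    PseudoMetricSpace.le_two_mul_dist_ofPreNNDist d dself dcomm hd2
  refine ⟨fun x y => dist x y, fun x y => dist_nonneg, ?_, fun x y => dist_comm x y,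
    fun x y z => dist_triangle x y z, ?_, ?_⟩
  · intro x y
    constructor
    · intro h
      by_contra hne
      have h1 : (d x y : ℝ) ≤ 0 := by
        have h' : dist x y = 0 := h
        have := htwo x y
        rw [h'] at this; linarith
      have h2 : (0 : ℝ) < (d x y : ℝ) := by
        simp only [hddef, if_neg hne]
        exact_mod_cast pow_pos half_pos (N (F x y))
      linarith
    · rintro rfl; exact dist_self x
  · intro ε hε
    obtain ⟨n, hn⟩ := exists_pow_lt_of_lt_one hε (by norm_num : (2⁻¹ : ℝ) < 1)
    refine ⟨D n, Dpos n, fun x y hF => ?_⟩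
    have h1 : d x y ≤ (2⁻¹ : NNReal) ^ (n + 1) := (dle_iff n x y).2 hF
    have h2 : (d x y : ℝ) ≤ (2⁻¹ : ℝ) ^ (n + 1) := by exact_mod_cast h1
    have h3 : (2⁻¹ : ℝ) ^ (n + 1) ≤ (2⁻¹ : ℝ) ^ n :=
      pow_le_pow_of_le_one (by norm_num) (by norm_num) (Nat.le_succ n)
    calc dist x y ≤ (d x y : ℝ) := hle x y
      _ ≤ (2⁻¹ : ℝ) ^ n := h2.trans h3
      _ < ε := hn
  · intro ε hε
    obtain ⟨k, hk⟩ := exists_pow_lt_of_lt_one hε (by norm_num : (2⁻¹ : ℝ) < 1)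
    refine ⟨(2⁻¹ : ℝ) ^ (k + 4), by positivity, fun x y hρ => ?_⟩
    have h2 : (d x y : ℝ) < 2 * (2⁻¹ : ℝ) ^ (k + 4) :=
      lt_of_le_of_lt (htwo x y) (by linarith)
    have heq : 2 * (2⁻¹ : ℝ) ^ (k + 4) = (2⁻¹ : ℝ) ^ (k + 3) := by
      rw [pow_succ]; ring
    have h4 : d x y < (2⁻¹ : NNReal) ^ (k + 3) := by
      rw [← NNReal.coe_lt_coe]
      push_cast
      rw [← heq]; exact h2
    have h5 : d x y ≤ (2⁻¹ : NNReal) ^ (k + 2) :=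
      (h4.trans (pow_lt_pow_right_of_lt_one₀ half_pos half_lt_one (by omega))).le
    have h6 : F x y < D (k + 1) := (dle_iff (k + 1) x y).1 h5
    have h7 : D (k + 1) ≤ (2⁻¹ : ℝ) ^ (k + 1) := Dsmall k
    have h8 : (2⁻¹ : ℝ) ^ (k + 1) ≤ (2⁻¹ : ℝ) ^ k :=
      pow_le_pow_of_le_one (by norm_num) (by norm_num) (Nat.le_succ k)
    linarith
end

section
/- Every B-action θ is continuous at the point (0,0): if (s_n, t_n) → (0,0) in [0,∞) × [0,∞), then θ(s_n, t_n) → 0. -/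
/-!
Given `ε > 0`, the bound `θ(ε/2, 0) ≤ ε/2 < ε` and continuity of `θ(ε/2, ·)` at `0` give some
`δ > 0` with `θ(ε/2, δ) < ε`. Once `sₙ < ε/2` and `tₙ < δ`, strict monotonicity yields
`0 ≤ θ(sₙ, tₙ) < θ(ε/2, δ) < ε`.
-/

open Filter Topology

lemma exists_pos_lt_of_continuousWithinAt_Ici {f : ℝ → ℝ} {c : ℝ}
    (hf : ContinuousWithinAt f (Set.Ici 0) 0) (h0 : f 0 < c) : ∃ δ > 0, f δ < c := by
  have hlt : ∀ᶠ x in 𝓝[>] (0 : ℝ), f x < c :=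
    nhdsWithin_mono _ Set.Ioi_subset_Ici_self (hf.eventually_lt_const h0)
  exact (hlt.and self_mem_nhdsWithin).exists.imp fun _ h => ⟨h.2, h.1⟩

lemma tendsto_zero_of_forall_exists_pos_lt {θ : ℝ → ℝ → ℝ}
    (hnn : ∀ s t, 0 ≤ s → 0 ≤ t → 0 ≤ θ s t)
    (hmono : ∀ x y a b, 0 ≤ x → 0 ≤ y → x < a → y < b → θ x y ≤ θ a b)
    (hsmall : ∀ ε > 0, ∃ a > 0, ∃ b > 0, θ a b < ε)
    {ι : Type*} {l : Filter ι} {s t : ι → ℝ} (hs : ∀ i, 0 ≤ s i) (ht : ∀ i, 0 ≤ t i)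
    (hs0 : Tendsto s l (𝓝 0)) (ht0 : Tendsto t l (𝓝 0)) :
    Tendsto (fun i => θ (s i) (t i)) l (𝓝 0) := by
  refine tendsto_order.2
    ⟨fun c hc => Eventually.of_forall fun i => hc.trans_le (hnn _ _ (hs i) (ht i)), fun ε hε => ?_⟩
  obtain ⟨a, ha, b, hb, hab⟩ := hsmall ε hε
  filter_upwards [hs0.eventually_lt_const ha, ht0.eventually_lt_const hb] with i hsi hti
  exact (hmono _ _ _ _ (hs i) (ht i) hsi hti).trans_lt hab

theorem Baction_continuous_at_zero_general (θ : ℝ → ℝ → ℝ)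
    (hc2 : ∀ s ≥ (0:ℝ), ContinuousOn (fun t => θ s t) (Set.Ici 0))
    (hnn : ∀ s t, 0 ≤ s → 0 ≤ t → 0 ≤ θ s t)
    (hmono : ∀ x y s t, 0 ≤ x → 0 ≤ y → 0 ≤ s → 0 ≤ t →
      ((x ≤ s ∧ y < t) ∨ (x < s ∧ y ≤ t)) → θ x y < θ s t)
    (hle : ∀ s > (0:ℝ), θ s 0 ≤ s)
    (s t : ℕ → ℝ) (hs : ∀ n, 0 ≤ s n) (ht : ∀ n, 0 ≤ t n)
    (hs0 : Tendsto s atTop (𝓝 0)) (ht0 : Tendsto t atTop (𝓝 0)) :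
    Tendsto (fun n => θ (s n) (t n)) atTop (𝓝 0) := by
  have hsmall : ∀ ε > 0, ∃ a > 0, ∃ b > 0, θ a b < ε := fun ε hε =>
    ⟨ε / 2, half_pos hε, exists_pos_lt_of_continuousWithinAt_Ici
      (hc2 _ (half_pos hε).le 0 Set.self_mem_Ici)
      ((hle _ (half_pos hε)).trans_lt (half_lt_self hε))⟩
  refine tendsto_zero_of_forall_exists_pos_lt hnn ?_ hsmall hs ht hs0 ht0
  intro x y a b hx hy hxa hyb
  exact (hmono x y a b hx hy (hx.trans hxa.le) (hy.trans hyb.le) (Or.inr ⟨hxa, hyb.le⟩)).le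

/-- Every B-action is continuous at (0,0): if (sₙ,tₙ) → (0,0) in [0,∞)², then
θ(sₙ,tₙ) → 0. -/
theorem Baction_continuous_at_zero (θ : ℝ → ℝ → ℝ)
    (hc1 : ∀ t ≥ (0:ℝ), ContinuousOn (fun s => θ s t) (Set.Ici 0))
    (hc2 : ∀ s ≥ (0:ℝ), ContinuousOn (fun t => θ s t) (Set.Ici 0))
    (hnn : ∀ s t, 0 ≤ s → 0 ≤ t → 0 ≤ θ s t)
    (h00 : θ 0 0 = 0)
    (hsymm : ∀ s t, 0 ≤ s → 0 ≤ t → θ s t = θ t s)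
    (hmono : ∀ x y s t, 0 ≤ x → 0 ≤ y → 0 ≤ s → 0 ≤ t →
      ((x ≤ s ∧ y < t) ∨ (x < s ∧ y ≤ t)) → θ x y < θ s t)
    (hsur : ∀ m, (∃ s t, 0 ≤ s ∧ 0 ≤ t ∧ θ s t = m) →
      ∀ t, 0 ≤ t → t ≤ m → ∃ s, 0 ≤ s ∧ s ≤ m ∧ θ s t = m)
    (hle : ∀ s > (0:ℝ), θ s 0 ≤ s)
    (s t : ℕ → ℝ) (hs : ∀ n, 0 ≤ s n) (ht : ∀ n, 0 ≤ t n)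
    (hs0 : Tendsto s atTop (𝓝 0)) (ht0 : Tendsto t atTop (𝓝 0)) :
    Tendsto (fun n => θ (s n) (t n)) atTop (𝓝 0) :=
  Baction_continuous_at_zero_general θ hc2 hnn hmono hle s t hs ht hs0 ht0
end

section
/- Every θ-metric space is metrizable: if (X, d, θ) is a θ-metric space, then the topology generated by the d-balls coincides with the topology of some metric on X. -/
/-!
The generalized triangle inequality `d x z ≤ θ (d x y) (d y z)`, combined with monotonicity of `θ`,
`θ s 0 ≤ s` and right continuity of `θ s` at `0`, gives two things: `d`-balls are open (a point
`z` close enough to `y` stays in any ball around `x` containing `y`), and the sets `{d < ε}` form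
the basis of a uniformity. This uniformity is T₀ and countably generated, hence metrizable, and its
topology is the ball topology of `d`.
-/

open Filter Set TopologicalSpace Topology Uniformity

namespace UniformSpace

variable {X : Type*}

/-- Like `UniformSpace.ofFun`, with the triangle inequality weakened to its uniform consequence
`d x y < δ → d y z < δ → d x z < ε`. -/
abbrev ofFunOfComp (d : X → X → ℝ) (refl : ∀ x, d x x = 0) (symm : ∀ x y, d x y = d y x)
    (comp : ∀ ε > 0, ∃ δ > 0, ∀ x y z, d x y < δ → d y z < δ → d x z < ε) :
    UniformSpace X :=
  .ofCore
    { uniformity := ⨅ r > 0, 𝓟 {p | d p.1 p.2 < r}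
      refl := le_iInf₂ fun r hr => principal_mono.2 <| by simp [Set.subset_def, *]
      symm := tendsto_iInf_iInf fun _ => tendsto_iInf_iInf fun _ => tendsto_principal_principal.2
        fun x hx => by rwa [mem_ofPred, symm]
      comp := le_iInf₂ fun r hr => let ⟨δ, h0, hδr⟩ := comp r hr; le_principal_iff.2 <|
        mem_of_superset
          (mem_lift' <| mem_iInf_of_mem δ <| mem_iInf_of_mem h0 <| mem_principal_self _)
          fun (x, z) ⟨y, h₁, h₂⟩ => hδr x y z h₁ h₂ }

theorem hasBasis_ofFunOfComp (d : X → X → ℝ) (refl : ∀ x, d x x = 0)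
    (symm : ∀ x y, d x y = d y x)
    (comp : ∀ ε > 0, ∃ δ > 0, ∀ x y z, d x y < δ → d y z < δ → d x z < ε) :
    𝓤[ofFunOfComp d refl symm comp].HasBasis ((0 : ℝ) < ·) (fun ε => {p | d p.1 p.2 < ε}) :=
  hasBasis_biInf_principal'
    (fun ε₁ h₁ ε₂ h₂ => ⟨min ε₁ ε₂, lt_min h₁ h₂,
      ofPred_subset_ofPred.2 fun _ hp => (lt_min_iff.1 hp).1,
      ofPred_subset_ofPred.2 fun _ hp => (lt_min_iff.1 hp).2⟩) ⟨1, one_pos⟩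

end UniformSpace

section BallTopology

variable {X : Type*}

theorem generateFrom_balls_eq [t : TopologicalSpace X] (e : X → X → ℝ)
    (hopen : ∀ x r, 0 < r → IsOpen {y | e x y < r})
    (hbasis : ∀ x, (𝓝 x).HasBasis ((0 : ℝ) < ·) fun r => {y | e x y < r}) :
    generateFrom {B : Set X | ∃ x r, 0 < r ∧ B = {y | e x y < r}} = t := by
  refine le_antisymm (le_of_nhds_le_nhds fun x => (hbasis x).ge_iff.2 fun r hr => ?_) ?_
  · rw [nhds_generateFrom]
    exact (iInf₂_le _ ⟨mem_of_mem_nhds ((hbasis x).mem_of_mem hr), x, r, hr, rfl⟩ :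
      _ ≤ 𝓟 _) (mem_principal_self _)
  · exact le_generateFrom fun _ ⟨x, r, hr, hB⟩ => hB ▸ hopen x r hr

theorem generateFrom_dist_balls_eq [PseudoMetricSpace X] :
    generateFrom {B : Set X | ∃ x r, 0 < r ∧ B = {y | dist x y < r}} =
      (inferInstance : TopologicalSpace X) := by
  have hball (x : X) (r : ℝ) : {y | dist x y < r} = Metric.ball x r :=
    Set.ext fun _ => Metric.mem_ball'.symm
  simp only [hball]
  exact generateFrom_balls_eq _ (fun _ _ _ => Metric.isOpen_ball) fun _ => Metric.nhds_basis_ball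

theorem exists_metric_generateFrom_balls_eq (d : X → X → ℝ) (hnn : ∀ x y, 0 ≤ d x y)
    (hd0 : ∀ x y, d x y = 0 ↔ x = y) (hsymm : ∀ x y, d x y = d y x)
    (hcomp : ∀ ε > 0, ∃ δ > 0, ∀ x y z, d x y < δ → d y z < δ → d x z < ε)
    (hopen : ∀ x y r, d x y < r → ∃ ε > 0, ∀ z, d y z < ε → d x z < r) :
    ∃ ρ : X → X → ℝ,
      (∀ x y, 0 ≤ ρ x y) ∧
      (∀ x y, ρ x y = 0 ↔ x = y) ∧
      (∀ x y, ρ x y = ρ y x) ∧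
      (∀ x y z, ρ x z ≤ ρ x y + ρ y z) ∧
      generateFrom {B : Set X | ∃ x r, 0 < r ∧ B = {y | d x y < r}}
        = generateFrom {B : Set X | ∃ x r, 0 < r ∧ B = {y | ρ x y < r}} := by
  have hrefl (x : X) : d x x = 0 := (hd0 x x).2 rfl
  let := UniformSpace.ofFunOfComp d hrefl hsymm hcomp
  have hU := UniformSpace.hasBasis_ofFunOfComp d hrefl hsymm hcomp
  have hbasis (x : X) : (𝓝 x).HasBasis ((0 : ℝ) < ·) fun r => {y | d x y < r} :=
    nhds_eq_comap_uniformity (x := x) ▸ hU.comap (Prod.mk x)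
  have hballs (x : X) (r : ℝ) (_ : 0 < r) : IsOpen {y | d x y < r} :=
    isOpen_iff_mem_nhds.2 fun y hy => (hbasis y).mem_iff.2 (hopen x y r hy)
  have : T0Space X := t0Space_iff_uniformity.2 fun x y hxy =>
    (hd0 x y).1 <| le_antisymm (le_of_forall_pos_lt_add fun ε hε => by
      simpa using hxy _ (hU.mem_of_mem hε)) (hnn x y)
  have : (𝓤 X).IsCountablyGenerated :=
    (hU.to_hasBasis (ι' := ℕ) (p' := fun _ => True) (s' := fun n => {p | d p.1 p.2 < 1 / (n + 1)})
      (fun ε hε => let ⟨n, hn⟩ := exists_nat_one_div_lt hε; ⟨n, trivial, fun _ hp => hp.trans hn⟩)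
      fun _ _ => ⟨_, Nat.one_div_pos_of_nat, subset_rfl⟩).isCountablyGenerated
  have : MetrizableSpace X := UniformSpace.metrizableSpace
  let := metrizableSpaceMetric X
  refine ⟨dist, fun _ _ => dist_nonneg, fun x y => dist_eq_zero, dist_comm, dist_triangle, ?_⟩
  rw [generateFrom_balls_eq d hballs hbasis, generateFrom_dist_balls_eq]
  rfl

end BallTopology

section Theta

variable {θ : ℝ → ℝ → ℝ}

theorem theta_mono
    (hmono : ∀ x y s t, 0 ≤ x → 0 ≤ y → 0 ≤ s → 0 ≤ t →
      ((x ≤ s ∧ y < t) ∨ (x < s ∧ y ≤ t)) → θ x y < θ s t)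
    {a b s t : ℝ} (ha : 0 ≤ a) (hb : 0 ≤ b) (hs : 0 ≤ s) (ht : 0 ≤ t) (has : a ≤ s) (hbt : b ≤ t) :
    θ a b ≤ θ s t := by
  rcases has.lt_or_eq with has | rfl
  · exact (hmono a b s t ha hb hs ht (Or.inr ⟨has, hbt⟩)).le
  rcases hbt.lt_or_eq with hbt | rfl
  · exact (hmono a b a t ha hb hs ht (Or.inl ⟨le_rfl, hbt⟩)).le
  · exact le_rfl

theorem exists_theta_lt_of_lt (hc : ∀ a ≥ 0, ContinuousWithinAt (θ a) (Ici 0) 0)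
    (h00 : θ 0 0 = 0) (hle : ∀ s > (0 : ℝ), θ s 0 ≤ s) {a r : ℝ} (ha : 0 ≤ a) (har : a < r) :
    ∃ ε > 0, ∀ t, 0 ≤ t → t < ε → θ a t < r := by
  have ha0 : θ a 0 < r := by
    rcases ha.eq_or_lt with rfl | ha
    · rwa [h00]
    · exact (hle a ha).trans_lt har
  obtain ⟨ε, hε, hsub⟩ := Metric.mem_nhdsWithin_iff.1 (hc a ha (Iio_mem_nhds ha0))
  refine ⟨ε, hε, fun t ht htε => hsub ⟨?_, ht⟩⟩
  rwa [Metric.mem_ball, Real.dist_eq, sub_zero, abs_of_nonneg ht]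

theorem exists_theta_lt
    (hmono : ∀ x y s t, 0 ≤ x → 0 ≤ y → 0 ≤ s → 0 ≤ t →
      ((x ≤ s ∧ y < t) ∨ (x < s ∧ y ≤ t)) → θ x y < θ s t)
    (hc : ∀ a ≥ 0, ContinuousWithinAt (θ a) (Ici 0) 0)
    (h00 : θ 0 0 = 0) (hle : ∀ s > (0 : ℝ), θ s 0 ≤ s) {ε : ℝ} (hε : 0 < ε) :
    ∃ δ > 0, ∀ a b, 0 ≤ a → 0 ≤ b → a < δ → b < δ → θ a b < ε := by
  obtain ⟨η, hη, hθ⟩ := exists_theta_lt_of_lt hc h00 hle (half_pos hε).le (half_lt_self hε)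
  refine ⟨min (ε / 2) (η / 2), by positivity, fun a b ha hb haδ hbδ => ?_⟩
  calc θ a b ≤ θ (ε / 2) (η / 2) :=
        theta_mono hmono ha hb (by positivity) (by positivity)
          (haδ.le.trans (min_le_left _ _)) (hbδ.le.trans (min_le_right _ _))
    _ < ε := hθ _ (by positivity) (half_lt_self hη)

end Theta

theorem thetaMetric_metrizable_general {X : Type*} (θ : ℝ → ℝ → ℝ)
    (hc2 : ∀ s ≥ (0:ℝ), ContinuousOn (fun t => θ s t) (Set.Ici 0))
    (h00 : θ 0 0 = 0)
    (hmono : ∀ x y s t, 0 ≤ x → 0 ≤ y → 0 ≤ s → 0 ≤ t →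
      ((x ≤ s ∧ y < t) ∨ (x < s ∧ y ≤ t)) → θ x y < θ s t)
    (hle : ∀ s > (0:ℝ), θ s 0 ≤ s)
    (d : X → X → ℝ)
    (hdnn : ∀ x y, 0 ≤ d x y)
    (hd0 : ∀ x y, d x y = 0 ↔ x = y)
    (hdsymm : ∀ x y, d x y = d y x)
    (hdtri : ∀ x y z, d x z ≤ θ (d x y) (d y z)) :
    ∃ ρ : X → X → ℝ,
      (∀ x y, 0 ≤ ρ x y) ∧
      (∀ x y, ρ x y = 0 ↔ x = y) ∧
      (∀ x y, ρ x y = ρ y x) ∧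
      (∀ x y z, ρ x z ≤ ρ x y + ρ y z) ∧
      TopologicalSpace.generateFrom {B : Set X | ∃ x r, 0 < r ∧ B = {y | d x y < r}}
        = TopologicalSpace.generateFrom {B : Set X | ∃ x r, 0 < r ∧ B = {y | ρ x y < r}} := by
  have hc (a : ℝ) (ha : 0 ≤ a) : ContinuousWithinAt (θ a) (Ici 0) 0 :=
    (hc2 a ha).continuousWithinAt self_mem_Ici
  refine exists_metric_generateFrom_balls_eq d hdnn hd0 hdsymm (fun ε hε => ?_) fun x y r hxy => ?_
  · obtain ⟨δ, hδ, hθ⟩ := exists_theta_lt hmono hc h00 hle hε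
    exact ⟨δ, hδ, fun x y z hxy hyz =>
      (hdtri x y z).trans_lt (hθ _ _ (hdnn x y) (hdnn y z) hxy hyz)⟩
  · obtain ⟨ε, hε, hθ⟩ := exists_theta_lt_of_lt hc h00 hle (hdnn x y) hxy
    exact ⟨ε, hε, fun z hz => (hdtri x y z).trans_lt (hθ _ (hdnn y z) hz)⟩

/-- Every θ-metric space is metrizable: the ball topology of d coincides with
the ball topology of some genuine metric. -/
theorem thetaMetric_metrizable {X : Type*} [Nonempty X] (θ : ℝ → ℝ → ℝ)
    (hc1 : ∀ t ≥ (0:ℝ), ContinuousOn (fun s => θ s t) (Set.Ici 0))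
    (hc2 : ∀ s ≥ (0:ℝ), ContinuousOn (fun t => θ s t) (Set.Ici 0))
    (hnn : ∀ s t, 0 ≤ s → 0 ≤ t → 0 ≤ θ s t)
    (h00 : θ 0 0 = 0)
    (hsymm : ∀ s t, 0 ≤ s → 0 ≤ t → θ s t = θ t s)
    (hmono : ∀ x y s t, 0 ≤ x → 0 ≤ y → 0 ≤ s → 0 ≤ t →
      ((x ≤ s ∧ y < t) ∨ (x < s ∧ y ≤ t)) → θ x y < θ s t)
    (hsur : ∀ m, (∃ s t, 0 ≤ s ∧ 0 ≤ t ∧ θ s t = m) →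
      ∀ t, 0 ≤ t → t ≤ m → ∃ s, 0 ≤ s ∧ s ≤ m ∧ θ s t = m)
    (hle : ∀ s > (0:ℝ), θ s 0 ≤ s)
    (d : X → X → ℝ)
    (hdnn : ∀ x y, 0 ≤ d x y)
    (hd0 : ∀ x y, d x y = 0 ↔ x = y)
    (hdsymm : ∀ x y, d x y = d y x)
    (hdtri : ∀ x y z, d x z ≤ θ (d x y) (d y z)) :
    ∃ ρ : X → X → ℝ,
      (∀ x y, 0 ≤ ρ x y) ∧
      (∀ x y, ρ x y = 0 ↔ x = y) ∧
      (∀ x y, ρ x y = ρ y x) ∧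
      (∀ x y z, ρ x z ≤ ρ x y + ρ y z) ∧
      TopologicalSpace.generateFrom {B : Set X | ∃ x r, 0 < r ∧ B = {y | d x y < r}}
        = TopologicalSpace.generateFrom {B : Set X | ∃ x r, 0 < r ∧ B = {y | ρ x y < r}} :=
  thetaMetric_metrizable_general θ hc2 h00 hmono hle d hdnn hd0 hdsymm hdtri
end

section
/- For any B-action θ and any ε > 0, there exists δ > 0 such that for all s, t ≥ 0 with s² + t² < δ², we have θ(s,t) < ε. -/
/-- For any B-action θ and ε > 0, there is δ > 0 with θ(s,t) < ε whenever
s,t ≥ 0 and s² + t² < δ². -/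
theorem Baction_small_ball (θ : ℝ → ℝ → ℝ)
    (hc1 : ∀ t ≥ (0:ℝ), ContinuousOn (fun s => θ s t) (Set.Ici 0))
    (hc2 : ∀ s ≥ (0:ℝ), ContinuousOn (fun t => θ s t) (Set.Ici 0))
    (hnn : ∀ s t, 0 ≤ s → 0 ≤ t → 0 ≤ θ s t)
    (h00 : θ 0 0 = 0)
    (hsymm : ∀ s t, 0 ≤ s → 0 ≤ t → θ s t = θ t s)
    (hmono : ∀ x y s t, 0 ≤ x → 0 ≤ y → 0 ≤ s → 0 ≤ t →
      ((x ≤ s ∧ y < t) ∨ (x < s ∧ y ≤ t)) → θ x y < θ s t)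
    (hsur : ∀ m, (∃ s t, 0 ≤ s ∧ 0 ≤ t ∧ θ s t = m) →
      ∀ t, 0 ≤ t → t ≤ m → ∃ s, 0 ≤ s ∧ s ≤ m ∧ θ s t = m)
    (hle : ∀ s > (0:ℝ), θ s 0 ≤ s) :
    ∀ ε > (0:ℝ), ∃ δ > (0:ℝ), ∀ s t : ℝ, 0 ≤ s → 0 ≤ t →
      s ^ 2 + t ^ 2 < δ ^ 2 → θ s t < ε := by
  intro ε hε
  -- continuity of s ↦ θ s 0 at 0 within Ici 0
  have hcw1 : ContinuousWithinAt (fun s => θ s 0) (Set.Ici 0) 0 :=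
    (hc1 0 le_rfl) 0 Set.self_mem_Ici
  have h1 : ∀ᶠ s in nhdsWithin 0 (Set.Ici 0), θ s 0 < ε := by
    have := hcw1.eventually (p := fun y => y < ε) ?_
    · exact this
    · have : θ 0 0 < ε := by rw [h00]; exact hε
      exact Filter.Tendsto.eventually_lt_const hε (by simp only [h00]; exact Filter.tendsto_id)
  obtain ⟨δ₁, hδ₁, hball1⟩ := Metric.mem_nhdsWithin_iff.1 h1
  set s₀ : ℝ := δ₁ / 2 with hs₀def
  have hs₀ : 0 < s₀ := by positivity
  have hθs₀ : θ s₀ 0 < ε := by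
    apply hball1
    constructor
    · simp only [Metric.mem_ball, Real.dist_eq, sub_zero, abs_of_pos hs₀, hs₀def]
      rw [abs_of_pos (by linarith : (0:ℝ) < δ₁ / 2)]
      linarith
    · exact hs₀.le
  -- continuity of t ↦ θ s₀ t at 0 within Ici 0
  have hcw2 : ContinuousWithinAt (fun t => θ s₀ t) (Set.Ici 0) 0 :=
    (hc2 s₀ hs₀.le) 0 Set.self_mem_Ici
  have h2 : ∀ᶠ t in nhdsWithin 0 (Set.Ici 0), θ s₀ t < ε := by
    exact hcw2.eventually (Filter.Tendsto.eventually_lt_const hθs₀ Filter.tendsto_id)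
  obtain ⟨δ₂, hδ₂, hball2⟩ := Metric.mem_nhdsWithin_iff.1 h2
  set t₀ : ℝ := δ₂ / 2 with ht₀def
  have ht₀ : 0 < t₀ := by positivity
  have hθt₀ : θ s₀ t₀ < ε := by
    apply hball2
    constructor
    · simp only [Metric.mem_ball, Real.dist_eq, sub_zero, abs_of_pos ht₀, ht₀def]
      rw [abs_of_pos (by linarith : (0:ℝ) < δ₂ / 2)]
      linarith
    · exact ht₀.le
  refine ⟨min s₀ t₀, lt_min hs₀ ht₀, ?_⟩
  intro s t hs ht hst
  have hδ := lt_min hs₀ ht₀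
  have hs' : s < min s₀ t₀ := by
    nlinarith [sq_nonneg t, sq_nonneg (s - min s₀ t₀), abs_of_nonneg hs]
  have ht' : t < min s₀ t₀ := by
    nlinarith [sq_nonneg s, sq_nonneg (t - min s₀ t₀)]
  have : θ s t < θ s₀ t₀ := by
    apply hmono s t s₀ t₀ hs ht hs₀.le ht₀.le
    exact Or.inl ⟨(hs'.le.trans (min_le_left _ _)), ht'.trans_le (min_le_right _ _)⟩
  linarith
end

section
/- For a b-metric space (X, d, S) with S ≥ 1, the function ρ(x,y) = d(x,y)^p for p = log_{2S} 2 (so that (2S)^p = 2) satisfies the uniform regularity condition with φ(ε) = ε/2, i.e., ρ(x,y) < ε/2 and ρ(y,z) < ε/2 imply ρ(x,z) < ε. -/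
/-!
The b-triangle inequality gives `d x z ≤ 2S · max (d x y) (d y z)`, and raising to the power
`p = log_{2S} 2` turns the factor `2S` into `(2S)^p = 2`, so `ρ x z ≤ 2 · max (ρ x y) (ρ y z)`.
-/

open Real

lemma le_two_mul_mul_max_of_le_mul_add {S a b c : ℝ} (hS : 0 ≤ S) (h : c ≤ S * (a + b)) :
    c ≤ 2 * S * max a b := by
  have hsum : a + b ≤ 2 * max a b := by linarith [le_max_left a b, le_max_right a b]
  nlinarith

lemma rpow_logb_two_le_two_mul_rpow {K c m : ℝ} (hK : 1 < K) (hc : 0 ≤ c) (hcm : c ≤ K * m) :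
    c ^ logb K 2 ≤ 2 * m ^ logb K 2 := by
  have hm : 0 ≤ m := nonneg_of_mul_nonneg_right (hc.trans hcm) (by linarith)
  calc c ^ logb K 2 ≤ (K * m) ^ logb K 2 :=
        rpow_le_rpow hc hcm (logb_pos hK one_lt_two).le
    _ = K ^ logb K 2 * m ^ logb K 2 := mul_rpow (by linarith) hm
    _ = 2 * m ^ logb K 2 := by rw [rpow_logb (by linarith) hK.ne' two_pos]

theorem bMetric_rpow_uniformly_regular_general {X : Type*}
    (d : X → X → ℝ) (S : ℝ) (hS : 1 ≤ S)
    (hnn : ∀ x y, 0 ≤ d x y)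
    (htri : ∀ x y z, d x z ≤ S * (d x y + d y z)) :
    ∀ ε > (0:ℝ), ∀ x y z : X,
      d x y ^ (Real.logb (2 * S) 2) < ε / 2 →
      d y z ^ (Real.logb (2 * S) 2) < ε / 2 →
      d x z ^ (Real.logb (2 * S) 2) < ε := by
  intro ε _ x y z hxy hyz
  have hmax : d x z ≤ 2 * S * max (d x y) (d y z) :=
    le_two_mul_mul_max_of_le_mul_add (by linarith) (htri x y z)
  have hxz := rpow_logb_two_le_two_mul_rpow (by linarith) (hnn x z) hmax
  have hmax_lt : max (d x y) (d y z) ^ logb (2 * S) 2 < ε / 2 := by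
    rcases max_choice (d x y) (d y z) with h | h <;> rwa [h]
  linarith

/-- For a b-metric space with S ≥ 1, the snowflaked distance ρ(x,y) = d(x,y)^p
with p = log_{2S} 2 is uniformly regular with φ(ε) = ε/2. -/
theorem bMetric_rpow_uniformly_regular {X : Type*} [Nonempty X]
    (d : X → X → ℝ) (S : ℝ) (hS : 1 ≤ S)
    (hnn : ∀ x y, 0 ≤ d x y)
    (h0 : ∀ x y, d x y = 0 ↔ x = y)
    (hsymm : ∀ x y, d x y = d y x)
    (htri : ∀ x y z, d x z ≤ S * (d x y + d y z)) :
    ∀ ε > (0:ℝ), ∀ x y z : X,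
      d x y ^ (Real.logb (2 * S) 2) < ε / 2 →
      d y z ^ (Real.logb (2 * S) 2) < ε / 2 →
      d x z ^ (Real.logb (2 * S) 2) < ε :=
  bMetric_rpow_uniformly_regular_general d S hS hnn htri
end

section
/- If θ is a B-action, then for every ε > 0 there exists δ > 0 such that θ(s,t) < ε whenever 0 ≤ s < δ and 0 ≤ t < δ; consequently, the sets {(x,y) : d(x,y) < ε} form a base of a separated uniformity on any θ-metric space (X, d, θ). -/
/-!
Continuity of `θ 0 ·` at `0` gives `t₀ > 0` with `θ 0 t₀ < ε`; continuity of `θ · t₀` at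
`0` then gives `θ s t₀ < ε` for all small `s`, and monotonicity in the second variable extends
this to every `t < t₀`. Through the θ-triangle inequality this is the composition axiom of the
uniformity, and the entourages intersect in the diagonal because `d` vanishes only there.
-/

open Filter Set Topology

theorem exists_pos_lt_of_continuousWithinAt_of_monotoneOn (θ : ℝ → ℝ → ℝ)
    (hc₁ : ∀ t ≥ (0:ℝ), ContinuousWithinAt (θ · t) (Ici 0) 0)
    (hc₂ : ContinuousWithinAt (θ 0) (Ici 0) 0)
    (hmono : ∀ s ≥ (0:ℝ), MonotoneOn (θ s) (Ici 0)) {ε : ℝ} (hε : θ 0 0 < ε) :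
    ∃ δ > (0:ℝ), ∀ s t : ℝ, 0 ≤ s → 0 ≤ t → s < δ → t < δ → θ s t < ε := by
  obtain ⟨t₀, ht₀ε, ht₀⟩ : ∃ t₀, θ 0 t₀ < ε ∧ 0 < t₀ :=
    ((hc₂.eventually_lt continuousWithinAt_const hε).filter_mono
      (nhdsWithin_mono _ Ioi_subset_Ici_self) |>.and self_mem_nhdsWithin).exists
  obtain ⟨δ, hδ, hsmall⟩ := mem_nhdsGE_iff_exists_Ico_subset.1
    ((hc₁ t₀ ht₀.le).eventually_lt continuousWithinAt_const ht₀ε)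
  refine ⟨min δ t₀, lt_min hδ ht₀, fun s t hs ht hsδ htδ => ?_⟩
  calc θ s t ≤ θ s t₀ := hmono s hs ht ht₀.le (htδ.trans_le (min_le_right _ _)).le
    _ < ε := hsmall ⟨hs, hsδ.trans_le (min_le_left _ _)⟩

theorem ker_iInf_principal_setOf_lt {X : Type*} (d : X → X → ℝ) (hdnn : ∀ x y, 0 ≤ d x y)
    (hd0 : ∀ x y, d x y = 0 ↔ x = y) :
    (⨅ ε ∈ Ioi (0:ℝ), 𝓟 {p : X × X | d p.1 p.2 < ε}).ker = {p : X × X | p.1 = p.2} := by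
  ext ⟨x, y⟩
  simp only [ker_iInf, ker_principal, mem_iInter, mem_Ioi, mem_ofPred_eq, ← hd0 x y]
  exact ⟨fun h => le_antisymm (le_of_forall_gt h) (hdnn x y), fun h ε hε => h ▸ hε⟩

theorem thetaMetric_uniformity_base_general {X : Type*} (θ : ℝ → ℝ → ℝ)
    (hc1 : ∀ t ≥ (0:ℝ), ContinuousOn (fun s => θ s t) (Set.Ici 0))
    (hc2 : ∀ s ≥ (0:ℝ), ContinuousOn (fun t => θ s t) (Set.Ici 0))
    (h00 : θ 0 0 = 0)
    (hmono : ∀ x y s t, 0 ≤ x → 0 ≤ y → 0 ≤ s → 0 ≤ t →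
      ((x ≤ s ∧ y < t) ∨ (x < s ∧ y ≤ t)) → θ x y < θ s t)
    (d : X → X → ℝ)
    (hdnn : ∀ x y, 0 ≤ d x y)
    (hd0 : ∀ x y, d x y = 0 ↔ x = y)
    (hdtri : ∀ x y z, d x z ≤ θ (d x y) (d y z)) :
    (∀ ε > (0:ℝ), ∃ δ > (0:ℝ), ∀ s t : ℝ, 0 ≤ s → 0 ≤ t → s < δ → t < δ → θ s t < ε) ∧
    (∀ ε > (0:ℝ), ∀ x : X, d x x < ε) ∧
    (∀ ε > (0:ℝ), ∃ δ > (0:ℝ), ∀ x y z : X, d x y < δ → d y z < δ → d x z < ε) ∧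
    ⋂₀ {s : Set (X × X) |
        s ∈ ⨅ ε ∈ Set.Ioi (0:ℝ), Filter.principal {p : X × X | d p.1 p.2 < ε}}
      = {p : X × X | p.1 = p.2} := by
  have hmono₂ : ∀ s ≥ (0:ℝ), MonotoneOn (θ s) (Ici 0) := fun s hs =>
    StrictMonoOn.monotoneOn fun t ht t' ht' htt' =>
      hmono s t s t' hs ht hs ht' (.inl ⟨le_rfl, htt'⟩)
  have hsmall : ∀ ε > (0:ℝ), ∃ δ > (0:ℝ), ∀ s t : ℝ, 0 ≤ s → 0 ≤ t → s < δ → t < δ →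
      θ s t < ε := fun ε hε =>
    exists_pos_lt_of_continuousWithinAt_of_monotoneOn θ (fun t ht => hc1 t ht 0 self_mem_Ici)
      (hc2 0 le_rfl 0 self_mem_Ici) hmono₂ (by rwa [h00])
  refine ⟨hsmall, fun ε hε x => (hd0 x x).2 rfl ▸ hε, fun ε hε => ?_,
    ker_iInf_principal_setOf_lt d hdnn hd0⟩
  obtain ⟨δ, hδ, hθ⟩ := hsmall ε hε
  exact ⟨δ, hδ, fun x y z hxy hyz =>
    (hdtri x y z).trans_lt (hθ _ _ (hdnn x y) (hdnn y z) hxy hyz)⟩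

/-- For a B-action θ, θ(s,t) is small when s,t are small; consequently the sets
{(x,y) : d(x,y) < ε} form a base of a separated uniformity on a θ-metric space. -/
theorem thetaMetric_uniformity_base {X : Type*} [Nonempty X] (θ : ℝ → ℝ → ℝ)
    (hc1 : ∀ t ≥ (0:ℝ), ContinuousOn (fun s => θ s t) (Set.Ici 0))
    (hc2 : ∀ s ≥ (0:ℝ), ContinuousOn (fun t => θ s t) (Set.Ici 0))
    (hnn : ∀ s t, 0 ≤ s → 0 ≤ t → 0 ≤ θ s t)
    (h00 : θ 0 0 = 0)
    (hsymm : ∀ s t, 0 ≤ s → 0 ≤ t → θ s t = θ t s)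
    (hmono : ∀ x y s t, 0 ≤ x → 0 ≤ y → 0 ≤ s → 0 ≤ t →
      ((x ≤ s ∧ y < t) ∨ (x < s ∧ y ≤ t)) → θ x y < θ s t)
    (hle : ∀ s > (0:ℝ), θ s 0 ≤ s)
    (d : X → X → ℝ)
    (hdnn : ∀ x y, 0 ≤ d x y)
    (hd0 : ∀ x y, d x y = 0 ↔ x = y)
    (hdsymm : ∀ x y, d x y = d y x)
    (hdtri : ∀ x y z, d x z ≤ θ (d x y) (d y z)) :
    (∀ ε > (0:ℝ), ∃ δ > (0:ℝ), ∀ s t : ℝ, 0 ≤ s → 0 ≤ t → s < δ → t < δ → θ s t < ε) ∧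
    (∀ ε > (0:ℝ), ∀ x : X, d x x < ε) ∧
    (∀ ε > (0:ℝ), ∃ δ > (0:ℝ), ∀ x y z : X, d x y < δ → d y z < δ → d x z < ε) ∧
    ⋂₀ {s : Set (X × X) |
        s ∈ ⨅ ε ∈ Set.Ioi (0:ℝ), Filter.principal {p : X × X | d p.1 p.2 < ε}}
      = {p : X × X | p.1 = p.2} :=
  thetaMetric_uniformity_base_general θ hc1 hc2 h00 hmono d hdnn hd0 hdtri
end
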